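/- arXiv:2407.20914 — 2 statements merged into one kernel-verified Lean document; each statement's English description precedes it below -/
import Mathlib

section
/- Suppose the real penalty parameter satisfies λ > max_{1≤u≤U} L_u. Then every local maximizer x* of f_0 over the relaxed feasible set A — i.e., every x* ∈ A for which there exists ε > 0 such that f_0(x) ≤ f_0(x*) for all x ∈ A with ‖x − x*‖₂ < ε — satisfies x*_n ∈ frontier(conv(𝒳)) (the topological boundary of conv(𝒳) in ℂ) for every n = 1,…,N. In particular, the same holds for every global maximizer of f_0 over A. -/
open Complex Finset

noncomputable section

/-- The set of `K`-th roots of unity in `ℂ`. -/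
def rootsSet (K : ℕ) : Set ℂ :=
  {z : ℂ | ∃ k : ℕ, k < K ∧ z = Complex.exp ((2 * Real.pi * k / K : ℝ) * Complex.I)}

/-- The convex hull (over `ℝ`) of the `K`-th roots of unity. -/
def hullSet (K : ℕ) : Set ℂ := convexHull ℝ (rootsSet K)

/-- The relaxed feasible set `A`. -/
def feasA (K N : ℕ) : Set (Fin (N + 1) → ℂ) :=
  {x | x 0 = 1 ∧ ∀ n : Fin (N + 1), n ≠ 0 → x n ∈ hullSet K}

/-- The discrete feasible set `D`. -/
def feasD (K N : ℕ) : Set (Fin (N + 1) → ℂ) :=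
  {x | x 0 = 1 ∧ ∀ n : Fin (N + 1), n ≠ 0 → x n ∈ rootsSet K}

/-- The ℓ1 norm of a complex vector. -/
def norm1 {N : ℕ} (x : Fin (N + 1) → ℂ) : ℝ := ∑ n, ‖x n‖

/-- The ℓ2 norm of a complex vector. -/
def norm2 {N : ℕ} (x : Fin (N + 1) → ℂ) : ℝ := Real.sqrt (∑ n, ‖x n‖ ^ 2)

/-- The (real) quadratic form `x^H C x`. -/
def quadForm {N : ℕ} (C : Matrix (Fin (N + 1)) (Fin (N + 1)) ℂ)
    (x : Fin (N + 1) → ℂ) : ℝ :=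
  (dotProduct (star x) (Matrix.mulVec C x)).re

/-- The Frobenius norm of a complex matrix. -/
def frobNorm {N : ℕ} (M : Matrix (Fin (N + 1)) (Fin (N + 1)) ℂ) : ℝ :=
  Real.sqrt (∑ i, ∑ j, ‖M i j‖ ^ 2)

/-- The SINR-type objective `f_u`. -/
def fObj {N U : ℕ} (C : Fin U → Fin U → Matrix (Fin (N + 1)) (Fin (N + 1)) ℂ)
    (σ : Fin U → ℝ) (u : Fin U) (x : Fin (N + 1) → ℂ) : ℝ :=
  quadForm (C u u) x /
    ((∑ u' ∈ Finset.univ.erase u, quadForm (C u u') x) + σ u ^ 2)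

/-- The Lipschitz constant `L_u`. -/
def Lconst {N U : ℕ} (C : Fin U → Fin U → Matrix (Fin (N + 1)) (Fin (N + 1)) ℂ)
    (σ : Fin U → ℝ) (u : Fin U) : ℝ :=
  2 * Real.sqrt ((N : ℝ) + 1) * frobNorm (C u u) / σ u ^ 2 *
    (1 + ((N : ℝ) + 1) * frobNorm (∑ u' ∈ Finset.univ.erase u, C u u') / σ u ^ 2)

/-- The minimum of the `f_u` over all users. -/
def minObj {N U : ℕ} (C : Fin U → Fin U → Matrix (Fin (N + 1)) (Fin (N + 1)) ℂ)
    (σ : Fin U → ℝ) (x : Fin (N + 1) → ℂ) : ℝ :=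
  ⨅ u : Fin U, fObj C σ u x

/-- The penalized objective `f_0`. -/
def f0 {N U : ℕ} (C : Fin U → Fin U → Matrix (Fin (N + 1)) (Fin (N + 1)) ℂ)
    (σ : Fin U → ℝ) (lam : ℝ) (x : Fin (N + 1) → ℂ) : ℝ :=
  minObj C σ x + lam * norm1 x

/-!
If some coordinate `x*_n` were an interior point of `conv(𝒳)`, it could be pushed radially
outwards by a small step `t` without leaving `A`. This raises `‖x‖₁` by exactly `t` and moves `x`
by `t` in `ℓ²`. On `A` every `f_u` is `L_u`-Lipschitz (its numerator and denominator are quadratic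
forms bounded via Cauchy–Schwarz by Frobenius norms, and the denominator is at least `σ_u²`), so
`min_u f_u` drops by at most `(max_u L_u) t < λ t`, and `f_0` strictly increases.
-/

open Matrix

section Norms

variable {N : ℕ}

lemma norm2_nonneg (x : Fin (N + 1) → ℂ) : 0 ≤ norm2 x := Real.sqrt_nonneg _

lemma frobNorm_nonneg (M : Matrix (Fin (N + 1)) (Fin (N + 1)) ℂ) : 0 ≤ frobNorm M :=
  Real.sqrt_nonneg _

lemma norm2_sub_comm (x y : Fin (N + 1) → ℂ) : norm2 (x - y) = norm2 (y - x) := by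
  simp only [norm2, Pi.sub_apply, norm_sub_rev]

lemma norm_star_dotProduct_le (x w : Fin (N + 1) → ℂ) : ‖star x ⬝ᵥ w‖ ≤ norm2 x * norm2 w :=
  calc ‖star x ⬝ᵥ w‖ ≤ ∑ i, ‖x i‖ * ‖w i‖ := (norm_sum_le _ _).trans_eq (by simp)
    _ ≤ norm2 x * norm2 w := Real.sum_mul_le_sqrt_mul_sqrt _ _ _

lemma norm2_mulVec_le (M : Matrix (Fin (N + 1)) (Fin (N + 1)) ℂ) (z : Fin (N + 1) → ℂ) :
    norm2 (M *ᵥ z) ≤ frobNorm M * norm2 z := by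
  have hrow : ∀ i, ‖(M *ᵥ z) i‖ ^ 2 ≤ (∑ j, ‖M i j‖ ^ 2) * norm2 z ^ 2 := fun i => by
    have h : ‖(M *ᵥ z) i‖ ≤ √(∑ j, ‖M i j‖ ^ 2) * norm2 z :=
      calc ‖(M *ᵥ z) i‖ = ‖∑ j, M i j * z j‖ := rfl
        _ ≤ ∑ j, ‖M i j‖ * ‖z j‖ := (norm_sum_le _ _).trans_eq (by simp)
        _ ≤ √(∑ j, ‖M i j‖ ^ 2) * norm2 z := Real.sum_mul_le_sqrt_mul_sqrt _ _ _
    calc ‖(M *ᵥ z) i‖ ^ 2 ≤ (√(∑ j, ‖M i j‖ ^ 2) * norm2 z) ^ 2 := by gcongr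
      _ = (∑ j, ‖M i j‖ ^ 2) * norm2 z ^ 2 := by rw [mul_pow, Real.sq_sqrt (by positivity)]
  calc norm2 (M *ᵥ z) ≤ √((∑ i, ∑ j, ‖M i j‖ ^ 2) * norm2 z ^ 2) :=
        Real.sqrt_le_sqrt <| (Finset.sum_le_sum fun i _ => hrow i).trans_eq (Finset.sum_mul ..).symm
    _ = frobNorm M * norm2 z := by
        rw [Real.sqrt_mul (by positivity), Real.sqrt_sq (norm2_nonneg z)]
        rfl

lemma norm_star_dotProduct_mulVec_le (M : Matrix (Fin (N + 1)) (Fin (N + 1)) ℂ)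
    (x z : Fin (N + 1) → ℂ) : ‖star x ⬝ᵥ M *ᵥ z‖ ≤ frobNorm M * (norm2 x * norm2 z) :=
  calc ‖star x ⬝ᵥ M *ᵥ z‖ ≤ norm2 x * norm2 (M *ᵥ z) := norm_star_dotProduct_le _ _
    _ ≤ norm2 x * (frobNorm M * norm2 z) := by gcongr; exacts [norm2_nonneg x, norm2_mulVec_le M z]
    _ = frobNorm M * (norm2 x * norm2 z) := by ring

end Norms

section QuadForm

variable {N : ℕ}

lemma quadForm_vecMulVec_nonneg (a x : Fin (N + 1) → ℂ) :
    0 ≤ quadForm (vecMulVec a (star a)) x := by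
  have h : star x ⬝ᵥ vecMulVec a (star a) *ᵥ x = star (star a ⬝ᵥ x) * (star a ⬝ᵥ x) := by
    rw [vecMulVec_mulVec, dotProduct_smul, op_smul_eq_mul, star_dotProduct]
  rw [quadForm, h, Complex.star_def, ← Complex.normSq_eq_conj_mul_self]
  exact Complex.normSq_nonneg _

lemma quadForm_sum {ι : Type*} (s : Finset ι) (M : ι → Matrix (Fin (N + 1)) (Fin (N + 1)) ℂ)
    (x : Fin (N + 1) → ℂ) : quadForm (∑ i ∈ s, M i) x = ∑ i ∈ s, quadForm (M i) x := by
  simp only [quadForm, sum_mulVec, dotProduct_sum, Complex.re_sum]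

lemma abs_quadForm_le (M : Matrix (Fin (N + 1)) (Fin (N + 1)) ℂ) (x : Fin (N + 1) → ℂ) :
    |quadForm M x| ≤ frobNorm M * (norm2 x * norm2 x) :=
  (Complex.abs_re_le_norm _).trans (norm_star_dotProduct_mulVec_le M x x)

lemma abs_quadForm_sub_le (M : Matrix (Fin (N + 1)) (Fin (N + 1)) ℂ) (x y : Fin (N + 1) → ℂ) :
    |quadForm M x - quadForm M y| ≤ frobNorm M * (norm2 x + norm2 y) * norm2 (x - y) := by
  have h : star x ⬝ᵥ M *ᵥ x - star y ⬝ᵥ M *ᵥ y =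
      star x ⬝ᵥ M *ᵥ (x - y) + star (x - y) ⬝ᵥ M *ᵥ y := by
    rw [mulVec_sub, dotProduct_sub, star_sub, sub_dotProduct]
    ring
  calc |quadForm M x - quadForm M y|
      ≤ ‖star x ⬝ᵥ M *ᵥ (x - y)‖ + ‖star (x - y) ⬝ᵥ M *ᵥ y‖ := by
        rw [quadForm, quadForm, ← Complex.sub_re, h]
        exact (Complex.abs_re_le_norm _).trans (norm_add_le _ _)
    _ ≤ frobNorm M * (norm2 x * norm2 (x - y)) + frobNorm M * (norm2 (x - y) * norm2 y) :=
        add_le_add (norm_star_dotProduct_mulVec_le _ _ _) (norm_star_dotProduct_mulVec_le _ _ _)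
    _ = frobNorm M * (norm2 x + norm2 y) * norm2 (x - y) := by ring

end QuadForm

lemma abs_div_sub_div_le {p q D E s P a b : ℝ} (hs : 0 < s) (hD : s ≤ D) (hE : s ≤ E)
    (hq : |q| ≤ P) (hpq : |p - q| ≤ a) (hDE : |D - E| ≤ b) :
    |p / D - q / E| ≤ a / s + P * b / s ^ 2 := by
  have hD0 : 0 < D := hs.trans_le hD
  have hE0 : 0 < E := hs.trans_le hE
  have ha : 0 ≤ a := (abs_nonneg _).trans hpq
  have hb : 0 ≤ b := (abs_nonneg _).trans hDE
  have hP : 0 ≤ P := (abs_nonneg _).trans hq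
  have h : p / D - q / E = (p - q) / D + q * (E - D) / (D * E) := by field_simp; ring
  calc |p / D - q / E| ≤ |p - q| / D + |q| * |D - E| / (D * E) := by
        rw [h]
        refine (abs_add_le _ _).trans_eq ?_
        rw [abs_div, abs_div, abs_mul, abs_sub_comm E D, abs_of_pos hD0,
          abs_of_pos (mul_pos hD0 hE0)]
    _ ≤ a / s + P * b / (s * s) := by gcongr
    _ = a / s + P * b / s ^ 2 := by rw [sq]

lemma ciInf_sub_ciInf_le_ciSup {ι : Type*} [Finite ι] {f g c : ι → ℝ}
    (h : ∀ i, f i - g i ≤ c i) : (⨅ i, f i) - ⨅ i, g i ≤ ⨆ i, c i := by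
  cases isEmpty_or_nonempty ι
  · simp [Real.iInf_of_isEmpty, Real.iSup_of_isEmpty]
  · suffices (⨅ i, f i) - ⨆ i, c i ≤ ⨅ i, g i by linarith
    refine le_ciInf fun i => ?_
    linarith [h i, Finite.ciInf_le f i, Finite.le_ciSup c i]

section Objective

variable {N U : ℕ} {a : Fin U → Fin U → Fin (N + 1) → ℂ}
  {C : Fin U → Fin U → Matrix (Fin (N + 1)) (Fin (N + 1)) ℂ} {σ : Fin U → ℝ}

lemma sq_le_fObj_denom (hC : ∀ u u' : Fin U, C u u' = vecMulVec (a u u') (star (a u u')))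
    (u : Fin U) (x : Fin (N + 1) → ℂ) :
    σ u ^ 2 ≤ (∑ u' ∈ Finset.univ.erase u, quadForm (C u u') x) + σ u ^ 2 :=
  le_add_of_nonneg_left <| Finset.sum_nonneg fun u' _ => hC u u' ▸ quadForm_vecMulVec_nonneg _ _

lemma abs_fObj_sub_le (hC : ∀ u u' : Fin U, C u u' = vecMulVec (a u u') (star (a u u')))
    (hσ : ∀ u, 0 < σ u) (u : Fin U) {x y : Fin (N + 1) → ℂ}
    (hx : norm2 x ≤ √((N : ℝ) + 1)) (hy : norm2 y ≤ √((N : ℝ) + 1)) :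
    |fObj C σ u x - fObj C σ u y| ≤ Lconst C σ u * norm2 (x - y) := by
  have hquad : ∀ M, |quadForm M x - quadForm M y| ≤
      frobNorm M * (2 * √((N : ℝ) + 1)) * norm2 (x - y) :=
    fun M => (abs_quadForm_sub_le M x y).trans <| mul_le_mul_of_nonneg_right
      (mul_le_mul_of_nonneg_left (by linarith) (frobNorm_nonneg M)) (norm2_nonneg _)
  have hnum : |quadForm (C u u) y| ≤ frobNorm (C u u) * ((N : ℝ) + 1) :=
    (abs_quadForm_le _ y).trans <| by
      rw [← Real.mul_self_sqrt (by positivity : (0 : ℝ) ≤ N + 1)]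
      exact mul_le_mul_of_nonneg_left (mul_self_le_mul_self (norm2_nonneg y) hy)
        (frobNorm_nonneg _)
  have hden : |((∑ u' ∈ Finset.univ.erase u, quadForm (C u u') x) + σ u ^ 2) -
      ((∑ u' ∈ Finset.univ.erase u, quadForm (C u u') y) + σ u ^ 2)| ≤
      frobNorm (∑ u' ∈ Finset.univ.erase u, C u u') * (2 * √((N : ℝ) + 1)) * norm2 (x - y) := by
    rw [add_sub_add_right_eq_sub, ← quadForm_sum, ← quadForm_sum]
    exact hquad _
  refine (abs_div_sub_div_le (pow_pos (hσ u) 2) (sq_le_fObj_denom hC u x)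
    (sq_le_fObj_denom hC u y) hnum (hquad _) hden).trans_eq ?_
  have hσ0 := (hσ u).ne'
  rw [Lconst]
  field_simp

lemma minObj_sub_le (hC : ∀ u u' : Fin U, C u u' = vecMulVec (a u u') (star (a u u')))
    (hσ : ∀ u, 0 < σ u) {x y : Fin (N + 1) → ℂ}
    (hx : norm2 x ≤ √((N : ℝ) + 1)) (hy : norm2 y ≤ √((N : ℝ) + 1)) :
    minObj C σ x - minObj C σ y ≤ (⨆ u, Lconst C σ u) * norm2 (x - y) := by
  rw [minObj, minObj, Real.iSup_mul_of_nonneg (norm2_nonneg _)]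
  exact ciInf_sub_ciInf_le_ciSup fun u => (le_abs_self _).trans (abs_fObj_sub_le hC hσ u hx hy)

end Objective

lemma norm_le_one_of_mem_hullSet {K : ℕ} {w : ℂ} (hw : w ∈ hullSet K) : ‖w‖ ≤ 1 := by
  have hroots : rootsSet K ⊆ Metric.closedBall 0 1 := by
    rintro z ⟨k, -, rfl⟩
    rw [Metric.mem_closedBall, dist_zero_right, Complex.norm_exp_ofReal_mul_I]
  simpa using convexHull_min hroots (convex_closedBall 0 1) hw

lemma norm2_le_of_mem_feasA {K N : ℕ} {x : Fin (N + 1) → ℂ} (hx : x ∈ feasA K N) :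
    norm2 x ≤ √((N : ℝ) + 1) := by
  have hcoord : ∀ m, ‖x m‖ ≤ 1 := fun m => by
    by_cases hm : m = 0
    · simp [hm, hx.1]
    · exact norm_le_one_of_mem_hullSet (hx.2 m hm)
  calc norm2 x ≤ √(∑ _m : Fin (N + 1), (1 : ℝ)) :=
        Real.sqrt_le_sqrt <| Finset.sum_le_sum fun m _ => pow_le_one₀ (norm_nonneg _) (hcoord m)
    _ = √((N : ℝ) + 1) := by simp

lemma update_mem_feasA {K N : ℕ} {x : Fin (N + 1) → ℂ} (hx : x ∈ feasA K N) {n : Fin (N + 1)}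
    (hn : n ≠ 0) {w : ℂ} (hw : w ∈ hullSet K) : Function.update x n w ∈ feasA K N := by
  refine ⟨by rw [Function.update_of_ne hn.symm, hx.1], fun m hm => ?_⟩
  rcases eq_or_ne m n with rfl | hmn
  · rwa [Function.update_self]
  · rw [Function.update_of_ne hmn]
    exact hx.2 m hm

section Update

variable {N : ℕ} (x : Fin (N + 1) → ℂ) (n : Fin (N + 1)) (w : ℂ)

lemma norm2_update_sub : norm2 (Function.update x n w - x) = ‖w - x n‖ := by
  rw [norm2, Finset.sum_eq_single n, Pi.sub_apply, Function.update_self,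
    Real.sqrt_sq (norm_nonneg _)]
  · intro m _ hmn
    simp [Function.update_of_ne hmn]
  · simp

lemma norm1_update : norm1 (Function.update x n w) = norm1 x - ‖x n‖ + ‖w‖ := by
  rw [norm1, norm1, ← Finset.add_sum_erase _ _ (Finset.mem_univ n), Function.update_self,
    Finset.sum_congr rfl fun m hm => by rw [Function.update_of_ne (Finset.ne_of_mem_erase hm)]]
  rw [← Finset.add_sum_erase _ _ (Finset.mem_univ n)]
  ring

end Update

lemma exists_mem_norm_eq_add_norm_sub {E : Type*} [NormedAddCommGroup E] [NormedSpace ℝ E]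
    [Nontrivial E] {S : Set E} {z : E} (hz : z ∈ interior S) {ε : ℝ} (hε : 0 < ε) :
    ∃ w ∈ S, 0 < ‖w - z‖ ∧ ‖w - z‖ < ε ∧ ‖w‖ = ‖z‖ + ‖w - z‖ := by
  obtain ⟨δ, hδ, hball⟩ := Metric.isOpen_iff.mp isOpen_interior z hz
  obtain ⟨d, hd, hzd⟩ : ∃ d : E, ‖d‖ = 1 ∧ SameRay ℝ z d := by
    rcases eq_or_ne z 0 with rfl | hz0
    · obtain ⟨d, hd⟩ := exists_norm_eq E zero_le_one
      exact ⟨d, hd, SameRay.zero_left d⟩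
    · exact ⟨‖z‖⁻¹ • z, norm_smul_inv_norm hz0,
        SameRay.sameRay_nonneg_smul_right z (by positivity)⟩
  obtain ⟨t, ht, htδ, htε⟩ : ∃ t, 0 < t ∧ t < δ ∧ t < ε :=
    ⟨min δ ε / 2, by positivity, by linarith [min_le_left δ ε], by linarith [min_le_right δ ε]⟩
  have hstep : ‖(z + t • d) - z‖ = t := by simp [norm_smul, hd, ht.le]
  refine ⟨z + t • d, interior_subset (hball ?_), ?_, ?_, ?_⟩
  · rwa [Metric.mem_ball, dist_eq_norm, hstep]
  · rwa [hstep]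
  · rwa [hstep]
  · rw [hstep, (hzd.nonneg_smul_right ht.le).norm_add, norm_smul, hd, mul_one,
      Real.norm_of_nonneg ht.le]

theorem stmt3_general
    (K N U : ℕ)
    (a : Fin U → Fin U → (Fin (N + 1) → ℂ))
    (C : Fin U → Fin U → Matrix (Fin (N + 1)) (Fin (N + 1)) ℂ)
    (hC : ∀ u u' : Fin U, C u u' = Matrix.vecMulVec (a u u') (star (a u u')))
    (σ : Fin U → ℝ) (hσ : ∀ u, 0 < σ u)
    (lam : ℝ) (hlam : (⨆ u, Lconst C σ u) < lam)
    (xstar : Fin (N + 1) → ℂ) (hxA : xstar ∈ feasA K N)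
    (hopt : ∃ ε > (0 : ℝ), ∀ x ∈ feasA K N,
      norm2 (x - xstar) < ε → f0 C σ lam x ≤ f0 C σ lam xstar) :
    ∀ n : Fin (N + 1), n ≠ 0 → xstar n ∈ frontier (hullSet K) := by
  intro n hn
  by_contra hfront
  obtain ⟨ε, hε, hloc⟩ := hopt
  have hint : xstar n ∈ interior (hullSet K) := by
    rw [← self_sdiff_frontier]
    exact ⟨hxA.2 n hn, hfront⟩
  obtain ⟨w, hw, ht, htε, hnorm⟩ := exists_mem_norm_eq_add_norm_sub hint hε
  set x := Function.update xstar n w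
  have hx : x ∈ feasA K N := update_mem_feasA hxA hn hw
  have hdist : norm2 (x - xstar) = ‖w - xstar n‖ := norm2_update_sub xstar n w
  have hnorm1 : norm1 x = norm1 xstar + ‖w - xstar n‖ := by
    rw [norm1_update, hnorm]
    ring
  have hmin := minObj_sub_le hC hσ (norm2_le_of_mem_feasA hxA) (norm2_le_of_mem_feasA hx)
  have hmax := hloc x hx (hdist ▸ htε)
  rw [norm2_sub_comm, hdist] at hmin
  rw [f0, f0, hnorm1] at hmax
  linarith [mul_lt_mul_of_pos_right hlam ht]

theorem stmt3
    (K N U : ℕ) (hK : 2 ≤ K) (hN : 1 ≤ N) (hU : 1 ≤ U)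
    (a : Fin U → Fin U → (Fin (N + 1) → ℂ))
    (C : Fin U → Fin U → Matrix (Fin (N + 1)) (Fin (N + 1)) ℂ)
    (hC : ∀ u u' : Fin U, C u u' = Matrix.vecMulVec (a u u') (star (a u u')))
    (σ : Fin U → ℝ) (hσ : ∀ u, 0 < σ u)
    (lam : ℝ) (hlam : (⨆ u, Lconst C σ u) < lam)
    (xstar : Fin (N + 1) → ℂ) (hxA : xstar ∈ feasA K N)
    (hopt : ∃ ε > (0 : ℝ), ∀ x ∈ feasA K N,
      norm2 (x - xstar) < ε → f0 C σ lam x ≤ f0 C σ lam xstar) :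
    ∀ n : Fin (N + 1), n ≠ 0 → xstar n ∈ frontier (hullSet K) :=
  stmt3_general K N U a C hC σ hσ lam hlam xstar hxA hopt
end
end

section
/- Let p ∈ frontier(conv(𝒳)) (the topological boundary of conv(𝒳) in ℂ), and let v ∈ 𝒳 be a nearest point of 𝒳 to p, i.e., |p − v| = min_{w ∈ 𝒳} |p − w|. Set t = |p − v|. Then 0 ≤ t ≤ sin(π/K) and |p|² = cos²(π/K) + (sin(π/K) − t)². -/
open Complex Finset

noncomputable section

/-!
The polygon lies in the half-planes `re (z / n) ≤ cos (π / K)`, one for each outer edge normal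
`n` with `n ^ K = -1`, and conversely every point satisfying all of them strictly lies in the
polygon. A frontier point therefore attains equality for some `n`, so that
`p = n * (cos (π / K) + s * I)` with `|s| ≤ sin (π / K)`: it lies on the edge between the roots
`n * exp (∓ i π / K)`, at distances `sin (π / K) ± s` from them. Distinct roots are at least
`2 sin (π / K)` apart, so by the triangle inequality no other root is nearer to `p`. Hence
`t = sin (π / K) - |s|` and `|p|² = cos² (π / K) + s²`.
-/

theorem Real.cos_le_cos_of_le_of_le_two_pi_sub {a x : ℝ} (ha : 0 ≤ a) (hax : a ≤ x)
    (hxa : x ≤ 2 * Real.pi - a) : Real.cos x ≤ Real.cos a := by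
  rcases le_total x Real.pi with hx | hx
  · exact Real.cos_le_cos_of_nonneg_of_le_pi ha hx hax
  · rw [← Real.cos_two_pi_sub]
    exact Real.cos_le_cos_of_nonneg_of_le_pi ha (by linarith) (by linarith)

theorem Complex.exists_eq_exp_of_pow_eq_one {N : ℕ} (hN : 0 < N) {z : ℂ} (hz : z ^ N = 1) :
    ∃ k < N, z = exp ((2 * Real.pi * k / N : ℝ) * I) := by
  have : NeZero N := ⟨hN.ne'⟩
  obtain ⟨k, hk, rfl⟩ := (isPrimitiveRoot_exp N hN.ne').eq_pow_of_pow_eq_one hz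
  refine ⟨k, hk, ?_⟩
  rw [← exp_nat_mul]
  push_cast
  ring_nf

theorem Complex.re_le_cos_of_pow_eq_one {N : ℕ} (hN : 0 < N) {z : ℂ} (hz : z ^ N = 1)
    (hz1 : z ≠ 1) : z.re ≤ Real.cos (2 * Real.pi / N) := by
  obtain ⟨k, hk, rfl⟩ := exists_eq_exp_of_pow_eq_one hN hz
  have hk0 : k ≠ 0 := by rintro rfl; simp at hz1
  have hk1 : (1 : ℝ) ≤ k := by exact_mod_cast Nat.one_le_iff_ne_zero.mpr hk0
  have hkN : (k : ℝ) + 1 ≤ N := by exact_mod_cast hk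
  rw [exp_ofReal_mul_I_re]
  have hpi := Real.pi_pos
  apply Real.cos_le_cos_of_le_of_le_two_pi_sub (by positivity)
  · exact div_le_div_of_nonneg_right (le_mul_of_one_le_right (by positivity) hk1) N.cast_nonneg
  · rw [div_le_iff₀ (by positivity), sub_mul, div_mul_cancel₀ _ (by positivity)]
    nlinarith

theorem Complex.norm_eq_one_of_pow_eq_neg_one {N : ℕ} (hN : 0 < N) {z : ℂ} (hz : z ^ N = -1) :
    ‖z‖ = 1 :=
  norm_eq_one_of_pow_eq_one (n := 2 * N) (by rw [pow_mul', hz]; norm_num) (by omega)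

theorem Complex.two_mul_sin_le_norm_sub_of_pow_eq_one {N : ℕ} (hN : 0 < N) {w w' : ℂ}
    (hw : w ^ N = 1) (hw' : w' ^ N = 1) (hne : w ≠ w') :
    2 * Real.sin (Real.pi / N) ≤ ‖w - w'‖ := by
  have hw'1 : ‖w'‖ = 1 := norm_eq_one_of_pow_eq_one hw' hN.ne'
  have hw'0 : w' ≠ 0 := norm_ne_zero_iff.mp (by rw [hw'1]; exact one_ne_zero)
  set z := w / w' with hz
  have hzN : z ^ N = 1 := by rw [div_pow, hw, hw', div_one]
  have hz1 : z ≠ 1 := by rwa [Ne, div_eq_one_iff_eq hw'0]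
  have hnorm : ‖w - w'‖ = ‖z - 1‖ := by
    rw [hz, div_sub_one hw'0, norm_div, hw'1, div_one]
  have hsq : ‖z - 1‖ ^ 2 = 2 - 2 * z.re := by
    have hre := sq_norm_sub_sq_re z
    rw [norm_eq_one_of_pow_eq_one hzN hN.ne'] at hre
    rw [Complex.sq_norm, normSq_apply]
    simp only [sub_re, one_re, sub_im, one_im, sub_zero]
    linear_combination -hre
  have hcos : Real.cos (2 * Real.pi / N) = 1 - 2 * Real.sin (Real.pi / N) ^ 2 := by
    rw [mul_div_assoc, Real.cos_two_mul, ← Real.sin_sq_add_cos_sq (Real.pi / N)]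
    ring
  have hle : (2 * Real.sin (Real.pi / N)) ^ 2 ≤ ‖z - 1‖ ^ 2 := by
    nlinarith [re_le_cos_of_pow_eq_one hN hzN hz1]
  rw [hnorm]
  exact (le_abs_self _).trans (abs_le_of_sq_le_sq hle (norm_nonneg _))

theorem Convex.smul_add_smul_mem_of_zero_mem {E : Type*} [AddCommGroup E] [Module ℝ E]
    {s : Set E} (hs : Convex ℝ s) (h0 : (0 : E) ∈ s) {x y : E} (hx : x ∈ s) (hy : y ∈ s)
    {a b : ℝ} (ha : 0 ≤ a) (hb : 0 ≤ b) (hab : a + b ≤ 1) : a • x + b • y ∈ s := by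
  rcases (add_nonneg ha hb).eq_or_lt with hab0 | hab0
  · obtain ⟨rfl, rfl⟩ : a = 0 ∧ b = 0 := ⟨by linarith, by linarith⟩
    simpa using h0
  have hmem : (a / (a + b)) • x + (b / (a + b)) • y ∈ s :=
    hs hx hy (by positivity) (by positivity) (by field_simp)
  convert (hs.starConvex h0).smul_mem hmem (add_nonneg ha hb) hab using 1
  simp only [smul_add, smul_smul]
  congr 2 <;> field_simp

theorem min_dist_le_dist_of_dist_add_dist_le {X : Type*} [PseudoMetricSpace X] {s : Set X}
    {d : ℝ} (hs : ∀ x ∈ s, ∀ y ∈ s, x ≠ y → d ≤ dist x y) {a b p x : X} (ha : a ∈ s)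
    (hx : x ∈ s) (hp : dist p a + dist p b ≤ d) :
    min (dist p a) (dist p b) ≤ dist p x := by
  by_cases hxa : x = a
  · rw [hxa]; exact min_le_left _ _
  have := hs x hx a ha hxa
  have := dist_triangle_left x a p
  exact (min_le_right _ _).trans (by linarith)

theorem exp_pi_div_mul_I_pow {K : ℕ} (hK : 0 < K) :
    exp ((Real.pi / K : ℝ) * I) ^ K = -1 := by
  have : (K : ℂ) ≠ 0 := by exact_mod_cast hK.ne'
  rw [← exp_nat_mul, ← exp_pi_mul_I]
  congr 1
  push_cast
  field_simp

theorem exp_neg_pi_div_mul_I_pow {K : ℕ} (hK : 0 < K) :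
    exp (-(Real.pi / K : ℝ) * I) ^ K = -1 := by
  rw [neg_mul, exp_neg, inv_pow, exp_pi_div_mul_I_pow hK, inv_neg, inv_one]

theorem norm_cos_add_mul_I_sub_exp (α s : ℝ) :
    ‖(Real.cos α + s * I) - exp (α * I)‖ = |s - Real.sin α| := by
  rw [exp_mul_I, ← ofReal_cos, ← ofReal_sin, add_sub_add_left_eq_sub, ← sub_mul, ← ofReal_sub,
    norm_mul, norm_I, mul_one, norm_real, Real.norm_eq_abs]

theorem abs_im_mul_cos_le_re_mul_sin {α : ℝ} (hS : 0 < Real.sin α) {q : ℂ}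
    (h₁ : (q * exp (α * I) ^ 2).re ≤ q.re) (h₂ : (q * exp (-α * I) ^ 2).re ≤ q.re) :
    |q.im * Real.cos α| ≤ q.re * Real.sin α := by
  rw [exp_mul_I, ← ofReal_cos, ← ofReal_sin] at h₁
  rw [← ofReal_neg, exp_mul_I, ← ofReal_cos, ← ofReal_sin, Real.cos_neg, Real.sin_neg] at h₂
  simp only [sq, mul_re, mul_im, add_re, add_im, ofReal_re, ofReal_im, I_re, I_im] at h₁ h₂
  have hpyth := Real.sin_sq_add_cos_sq α
  have k₁ : 0 ≤ Real.sin α * (q.re * Real.sin α + q.im * Real.cos α) := by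
    linear_combination (1 / 2) * h₁ - (q.re / 2) * hpyth
  have k₂ : 0 ≤ Real.sin α * (q.re * Real.sin α - q.im * Real.cos α) := by
    linear_combination (1 / 2) * h₂ - (q.re / 2) * hpyth
  have := nonneg_of_mul_nonneg_right k₁ hS
  have := nonneg_of_mul_nonneg_right k₂ hS
  exact abs_le.2 ⟨by linarith, by linarith⟩

theorem exists_eq_mul_exp_neg_add_mul_exp {α : ℝ} (hS : 0 < Real.sin α) {q : ℂ}
    (hle : |q.im * Real.cos α| ≤ q.re * Real.sin α) (hlt : q.re < Real.cos α) :
    ∃ a b : ℝ, 0 ≤ a ∧ 0 ≤ b ∧ a + b ≤ 1 ∧ q = a * exp (-α * I) + b * exp (α * I) := by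
  obtain ⟨hle₁, hle₂⟩ := abs_le.1 hle
  have hc : 0 < Real.cos α := hlt.trans_le' (nonneg_of_mul_nonneg_left (by linarith) hS)
  refine ⟨(q.re * Real.sin α - q.im * Real.cos α) / (2 * Real.cos α * Real.sin α),
    (q.re * Real.sin α + q.im * Real.cos α) / (2 * Real.cos α * Real.sin α),
    div_nonneg (by linarith) (by positivity), div_nonneg (by linarith) (by positivity), ?_, ?_⟩
  · rw [← add_div, div_le_one (by positivity)]
    nlinarith
  · apply Complex.ext <;>
      simp only [← ofReal_neg, add_re, add_im, re_ofReal_mul, im_ofReal_mul, exp_ofReal_mul_I_re,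
        exp_ofReal_mul_I_im, Real.cos_neg, Real.sin_neg] <;>
      field_simp <;> ring

theorem mem_rootsSet_iff {K : ℕ} (hK : 0 < K) {z : ℂ} : z ∈ rootsSet K ↔ z ^ K = 1 := by
  constructor
  · rintro ⟨k, -, rfl⟩
    have : (K : ℂ) ≠ 0 := by exact_mod_cast hK.ne'
    rw [← exp_nat_mul, ← exp_nat_mul_two_pi_mul_I k]
    congr 1
    push_cast
    field_simp
  · intro hz
    obtain ⟨k, hk, rfl⟩ := exists_eq_exp_of_pow_eq_one hK hz
    exact ⟨k, hk, rfl⟩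

theorem convex_hullSet (K : ℕ) : Convex ℝ (hullSet K) := convex_convexHull ℝ _

theorem isClosed_hullSet {K : ℕ} (hK : 0 < K) : IsClosed (hullSet K) := by
  have hfin : (rootsSet K).Finite :=
    (Polynomial.nthRootsFinset K (1 : ℂ)).finite_toSet.subset fun z hz =>
      (Polynomial.mem_nthRootsFinset hK _).2 ((mem_rootsSet_iff hK).1 hz)
  exact (hfin.isCompact_convexHull (𝕜 := ℝ)).isClosed

theorem zero_mem_hullSet {K : ℕ} (hK : 2 ≤ K) : (0 : ℂ) ∈ hullSet K := by
  set ζ := exp (2 * Real.pi * I / K)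
  have hζ : IsPrimitiveRoot ζ K := isPrimitiveRoot_exp K (by omega)
  have hmem : ∀ i ∈ range K, ζ ^ i ∈ hullSet K := fun i _ =>
    subset_convexHull ℝ _ <| (mem_rootsSet_iff (by omega)).2 <| by
      rw [← pow_mul, mul_comm, pow_mul, hζ.pow_eq_one, one_pow]
  have hK0 : (K : ℝ) ≠ 0 := by positivity
  convert (convex_hullSet K).sum_mem (w := fun _ => (K : ℝ)⁻¹) (by intros; positivity)
    (by rw [sum_const, card_range, nsmul_eq_mul]; field_simp) hmem
  rw [← Finset.smul_sum, hζ.geom_sum_eq_zero (by omega), smul_zero]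

theorem hullSet_subset_closedBall {K : ℕ} (hK : 0 < K) : hullSet K ⊆ Metric.closedBall 0 1 :=
  convexHull_min (fun z hz => by
    simp [norm_eq_one_of_pow_eq_one ((mem_rootsSet_iff hK).1 hz) hK.ne'])
    (convex_closedBall 0 1)

theorem re_div_le_cos_of_mem_hullSet {K : ℕ} (hK : 0 < K) {n z : ℂ} (hn : n ^ K = -1)
    (hz : z ∈ hullSet K) : (z / n).re ≤ Real.cos (Real.pi / K) := by
  refine convexHull_min (fun w hw => ?_)
    (convex_halfSpace_le (𝕜 := ℝ) (f := fun w : ℂ => (w / n).re) ?_ _) hz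
  · have hwn : (w / n) ^ K = -1 := by rw [div_pow, (mem_rootsSet_iff hK).1 hw, hn]; norm_num
    have hwn1 : w / n ≠ 1 := fun h => by norm_num [h] at hwn
    have := re_le_cos_of_pow_eq_one (N := 2 * K) (by omega) (by rw [pow_mul', hwn]; norm_num) hwn1
    rwa [Nat.cast_mul, Nat.cast_two, mul_div_mul_left _ _ two_ne_zero] at this
  · exact ⟨fun x y => by simp [add_div], fun r x => by simp [real_smul, mul_div_assoc]⟩

theorem mem_hullSet_of_forall_re_div_lt {K : ℕ} (hK : 2 ≤ K) {z : ℂ}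
    (h : ∀ n ∈ Polynomial.nthRootsFinset K (-1 : ℂ), (z / n).re < Real.cos (Real.pi / K)) :
    z ∈ hullSet K := by
  have hK0 : 0 < K := by omega
  have mem_normals : ∀ {m : ℂ}, m ∈ Polynomial.nthRootsFinset K (-1 : ℂ) ↔ m ^ K = -1 :=
    Polynomial.mem_nthRootsFinset hK0 _
  set α := Real.pi / K
  have hS : 0 < Real.sin α := Real.sin_pos_of_pos_of_lt_pi (by positivity)
    (div_lt_self Real.pi_pos (by norm_cast))
  set e := exp (α * I)
  have heK : e ^ K = -1 := exp_pi_div_mul_I_pow hK0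
  have he' : exp (-α * I) = e⁻¹ := by rw [neg_mul, exp_neg]
  obtain ⟨n, hn, hmax⟩ := (Polynomial.nthRootsFinset K (-1 : ℂ)).exists_max_image
    (fun m => (z / m).re) ⟨e, mem_normals.2 heK⟩
  have hnK := mem_normals.1 hn
  have hn0 : n ≠ 0 := by rintro rfl; norm_num [zero_pow hK0.ne'] at hnK
  set q := z / n with hq
  -- comparing `n` with its neighbours `n * e⁻¹ ^ 2` and `n * e ^ 2` puts `q` in the cone over
  -- the edge from `e⁻¹` to `e`
  have hsector : |q.im * Real.cos α| ≤ q.re * Real.sin α := by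
    refine abs_im_mul_cos_le_re_mul_sin hS ?_ ?_
    · have := hmax (n * e⁻¹ ^ 2) (mem_normals.2 (by
        rw [mul_pow, ← pow_mul, mul_comm 2, pow_mul, inv_pow, heK]; norm_num [hnK]))
      rwa [div_mul_eq_div_div, ← hq, inv_pow, div_inv_eq_mul] at this
    · have := hmax (n * e ^ 2) (mem_normals.2 (by
        rw [mul_pow, ← pow_mul, mul_comm 2, pow_mul, heK]; norm_num [hnK]))
      rwa [div_mul_eq_div_div, ← hq, div_eq_mul_inv, ← inv_pow, ← he'] at this
  obtain ⟨a, b, ha, hb, hab, hqab⟩ := exists_eq_mul_exp_neg_add_mul_exp hS hsector (h n hn)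
  have hvertex : ∀ w : ℂ, w ^ K = -1 → n * w ∈ hullSet K := fun w hw =>
    subset_convexHull ℝ _ ((mem_rootsSet_iff hK0).2 (by rw [mul_pow, hnK, hw]; norm_num))
  have := (convex_hullSet K).smul_add_smul_mem_of_zero_mem (zero_mem_hullSet hK)
    (hvertex _ (exp_neg_pi_div_mul_I_pow hK0)) (hvertex _ heK) ha hb hab
  rwa [real_smul, real_smul, mul_left_comm, mul_left_comm (b : ℂ), ← mul_add, ← hqab, hq,
    mul_div_cancel₀ _ hn0] at this

theorem exists_re_div_eq_cos_of_mem_frontier {K : ℕ} (hK : 2 ≤ K) {p : ℂ}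
    (hp : p ∈ frontier (hullSet K)) :
    ∃ n : ℂ, n ^ K = -1 ∧ (p / n).re = Real.cos (Real.pi / K) := by
  have hK0 : 0 < K := by omega
  have hmem : p ∈ hullSet K := (isClosed_hullSet hK0).frontier_subset hp
  by_contra! hne
  set O := ⋂ n ∈ Polynomial.nthRootsFinset K (-1 : ℂ),
    {z : ℂ | (z / n).re < Real.cos (Real.pi / K)}
  have hO : IsOpen O := isOpen_biInter_finset fun n _ => isOpen_lt (by fun_prop) continuous_const
  have hpO : p ∈ O := Set.mem_iInter₂.2 fun n hn =>
    have hnK := (Polynomial.mem_nthRootsFinset hK0 _).1 hn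
    (re_div_le_cos_of_mem_hullSet hK0 hnK hmem).lt_of_ne (hne n hnK)
  have hOsub : O ⊆ hullSet K := fun z hz =>
    mem_hullSet_of_forall_re_div_lt hK fun n hn => Set.mem_iInter₂.1 hz n hn
  exact hp.2 (interior_maximal hOsub hO hpO)

theorem exists_eq_mul_of_mem_frontier {K : ℕ} (hK : 2 ≤ K) {p : ℂ}
    (hp : p ∈ frontier (hullSet K)) :
    ∃ n : ℂ, n ^ K = -1 ∧ ∃ s : ℝ, |s| ≤ Real.sin (Real.pi / K) ∧
      p = n * (Real.cos (Real.pi / K) + s * I) := by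
  have hK0 : 0 < K := by omega
  obtain ⟨n, hn, hre⟩ := exists_re_div_eq_cos_of_mem_frontier hK hp
  have hn1 := norm_eq_one_of_pow_eq_neg_one hK0 hn
  have hn0 : n ≠ 0 := norm_ne_zero_iff.mp (by rw [hn1]; exact one_ne_zero)
  refine ⟨n, hn, (p / n).im, ?_, by rw [← hre, re_add_im, mul_div_cancel₀ _ hn0]⟩
  have hnorm : ‖p / n‖ ≤ 1 := by
    rw [norm_div, hn1, div_one, ← mem_closedBall_zero_iff]
    exact hullSet_subset_closedBall hK0 ((isClosed_hullSet hK0).frontier_subset hp)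
  have hsin : 0 ≤ Real.sin (Real.pi / K) :=
    Real.sin_nonneg_of_nonneg_of_le_pi (by positivity) (div_le_self Real.pi_pos.le (by norm_cast))
  refine abs_le_of_sq_le_sq ?_ hsin
  have := sq_norm_sub_sq_re (p / n)
  rw [hre] at this
  nlinarith [Real.sin_sq_add_cos_sq (Real.pi / K), norm_nonneg (p / n)]

theorem norm_sub_eq_sin_sub_abs_of_forall_le {K : ℕ} (hK : 0 < K) {n : ℂ} (hn : n ^ K = -1)
    {s : ℝ} (hs : |s| ≤ Real.sin (Real.pi / K)) {v : ℂ} (hv : v ∈ rootsSet K)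
    (hnear : ∀ w ∈ rootsSet K, ‖n * (Real.cos (Real.pi / K) + s * I) - v‖ ≤
      ‖n * (Real.cos (Real.pi / K) + s * I) - w‖) :
    ‖n * (Real.cos (Real.pi / K) + s * I) - v‖ = Real.sin (Real.pi / K) - |s| := by
  set α := Real.pi / K
  set p := n * (Real.cos α + s * I)
  have hn1 := norm_eq_one_of_pow_eq_neg_one hK hn
  set A := n * exp (-α * I)
  set B := n * exp (α * I)
  have hA : A ∈ rootsSet K :=
    (mem_rootsSet_iff hK).2 (by rw [mul_pow, hn, exp_neg_pi_div_mul_I_pow hK]; norm_num)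
  have hB : B ∈ rootsSet K :=
    (mem_rootsSet_iff hK).2 (by rw [mul_pow, hn, exp_pi_div_mul_I_pow hK]; norm_num)
  obtain ⟨hs₁, hs₂⟩ := abs_le.1 hs
  have hpA : ‖p - A‖ = Real.sin α + s := by
    have := norm_cos_add_mul_I_sub_exp (-α) s
    rw [Real.cos_neg, Real.sin_neg, sub_neg_eq_add, ofReal_neg] at this
    rw [← mul_sub, norm_mul, hn1, one_mul, this, abs_of_nonneg (by linarith), add_comm]
  have hpB : ‖p - B‖ = Real.sin α - s := by
    rw [← mul_sub, norm_mul, hn1, one_mul, norm_cos_add_mul_I_sub_exp, abs_sub_comm,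
      abs_of_nonneg (by linarith)]
  have hsep : ∀ x ∈ rootsSet K, ∀ y ∈ rootsSet K, x ≠ y → 2 * Real.sin α ≤ dist x y :=
    fun x hx y hy hxy => by
      rw [dist_eq_norm]
      exact two_mul_sin_le_norm_sub_of_pow_eq_one hK ((mem_rootsSet_iff hK).1 hx)
        ((mem_rootsSet_iff hK).1 hy) hxy
  have hlow := min_dist_le_dist_of_dist_add_dist_le (b := B) (p := p) hsep hA hv
    (by rw [dist_eq_norm, dist_eq_norm, hpA, hpB]; linarith)
  rw [dist_eq_norm, dist_eq_norm, dist_eq_norm, hpA, hpB] at hlow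
  have := hnear A hA
  have := hnear B hB
  rcases abs_cases s with ⟨habs, _⟩ | ⟨habs, _⟩ <;> rcases min_le_iff.1 hlow with h | h <;>
    linarith

theorem stmt8 (K : ℕ) (hK : 2 ≤ K)
    (p : ℂ) (hp : p ∈ frontier (hullSet K))
    (v : ℂ) (hv : v ∈ rootsSet K)
    (hnear : ∀ w ∈ rootsSet K, ‖p - v‖ ≤ ‖p - w‖) :
    0 ≤ ‖p - v‖ ∧ ‖p - v‖ ≤ Real.sin (Real.pi / K) ∧
      ‖p‖ ^ 2 =
        Real.cos (Real.pi / K) ^ 2 +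
          (Real.sin (Real.pi / K) - ‖p - v‖) ^ 2 := by
  have hK0 : 0 < K := by omega
  obtain ⟨n, hn, s, hs, rfl⟩ := exists_eq_mul_of_mem_frontier hK hp
  have hdist := norm_sub_eq_sin_sub_abs_of_forall_le hK0 hn hs hv hnear
  have hnorm : ‖n * (Real.cos (Real.pi / K) + s * I)‖ ^ 2 = Real.cos (Real.pi / K) ^ 2 + s ^ 2 := by
    rw [norm_mul, norm_eq_one_of_pow_eq_neg_one hK0 hn, one_mul, norm_add_mul_I,
      Real.sq_sqrt (by positivity)]
  refine ⟨norm_nonneg _, by linarith [abs_nonneg s], ?_⟩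
  rw [hnorm, hdist, sub_sub_cancel, sq_abs]
end
end
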